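/- arXiv:2308.07344 — 8 statements merged into one kernel-verified Lean document; each statement's English description precedes it below -/
import Mathlib

section
/- For fixed A > 0, the Erlang B blocking probability is strictly decreasing in the number of servers: E_{k+1}(A) < E_k(A) for all k ≥ 0. -/
open Finset

noncomputable def ErlangB (k : ℕ) (A : ℝ) : ℝ :=
  (A ^ k / (Nat.factorial k : ℝ)) / (∑ m ∈ Finset.range (k + 1), A ^ m / (Nat.factorial m : ℝ))

/-- Comparing the cross products term by term: `f (k+1) * f i ≤ f k * f (i+1)` for `i ≤ k`,
and the extra term `f k * f 0` of the right-hand side makes the inequality strict. -/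
theorem div_sum_range_succ_lt_of_mul_le {f : ℕ → ℝ} (hpos : ∀ n, 0 < f n) {k : ℕ}
    (hcross : ∀ i ≤ k, f (k + 1) * f i ≤ f k * f (i + 1)) :
    f (k + 1) / ∑ i ∈ range (k + 1 + 1), f i < f k / ∑ i ∈ range (k + 1), f i := by
  have hsum_pos : ∀ n, 0 < ∑ i ∈ range (n + 1), f i := fun n =>
    sum_pos (fun i _ => hpos i) nonempty_range_add_one
  rw [div_lt_div_iff₀ (hsum_pos (k + 1)) (hsum_pos k)]
  calc f (k + 1) * ∑ i ∈ range (k + 1), f i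
      = ∑ i ∈ range (k + 1), f (k + 1) * f i := mul_sum _ _ _
    _ ≤ ∑ i ∈ range (k + 1), f k * f (i + 1) :=
        sum_le_sum fun i hi => hcross i (Nat.lt_succ_iff.mp (mem_range.mp hi))
    _ < ∑ i ∈ range (k + 1), f k * f (i + 1) + f k * f 0 := by
        linarith [mul_pos (hpos k) (hpos 0)]
    _ = f k * ∑ i ∈ range (k + 1 + 1), f i := by
        rw [sum_range_succ' f (k + 1), mul_add, mul_sum]

noncomputable def erlangTerm (A : ℝ) (m : ℕ) : ℝ := A ^ m / (Nat.factorial m : ℝ)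

theorem erlangB_eq_erlangTerm_div_sum (k : ℕ) (A : ℝ) :
    ErlangB k A = erlangTerm A k / ∑ m ∈ range (k + 1), erlangTerm A m := rfl

theorem erlangTerm_pos {A : ℝ} (hA : 0 < A) (m : ℕ) : 0 < erlangTerm A m := by
  unfold erlangTerm
  positivity

theorem erlangTerm_succ (A : ℝ) (m : ℕ) :
    erlangTerm A (m + 1) = erlangTerm A m * (A / (m + 1)) := by
  unfold erlangTerm
  rw [Nat.factorial_succ, pow_succ]
  push_cast
  field_simp

/-- Log-concavity of `m ↦ A ^ m / m!`: the ratio `A / (m + 1)` of consecutive terms decreases. -/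
theorem erlangTerm_succ_mul_le {A : ℝ} (hA : 0 ≤ A) {i k : ℕ} (hik : i ≤ k) :
    erlangTerm A (k + 1) * erlangTerm A i ≤ erlangTerm A k * erlangTerm A (i + 1) := by
  have hk : 0 ≤ erlangTerm A k := by unfold erlangTerm; positivity
  have hi : 0 ≤ erlangTerm A i := by unfold erlangTerm; positivity
  rw [erlangTerm_succ, erlangTerm_succ]
  calc erlangTerm A k * (A / (k + 1)) * erlangTerm A i
      = erlangTerm A k * erlangTerm A i * (A / (k + 1)) := by ring
    _ ≤ erlangTerm A k * erlangTerm A i * (A / (i + 1)) := by gcongr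
    _ = erlangTerm A k * (erlangTerm A i * (A / (i + 1))) := by ring

theorem erlangB_strict_anti_in_servers (A : ℝ) (hA : 0 < A) (k : ℕ) :
    ErlangB (k + 1) A < ErlangB k A := by
  rw [erlangB_eq_erlangTerm_div_sum, erlangB_eq_erlangTerm_div_sum]
  exact div_sum_range_succ_lt_of_mul_le (erlangTerm_pos hA)
    fun i hik => erlangTerm_succ_mul_le hA.le hik
end

section
/- For fixed k ≥ 1, the carried-load-loss function A ↦ A·E_k(A) is strictly increasing on (0,∞). -/
/-!
Clearing denominators, `A · E_k(A) = A^(k+1) / ∑_{m ≤ k} (k!/m!) A^m`: a monomial divided by a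
polynomial with positive coefficients of strictly smaller degree. Cross-multiplying two values
at `0 < x < y` reduces strict monotonicity to the termwise inequality `x^n y^m < y^n x^m` for
`m < n`, i.e. `(xy)^m x^(n-m) < (xy)^m y^(n-m)`.
-/

open Finset

theorem pow_mul_pow_lt_pow_mul_pow {R : Type*} [CommSemiring R] [PartialOrder R]
    [IsStrictOrderedRing R] {x y : R} (hx : 0 < x) (hxy : x < y) {m n : ℕ} (hmn : m < n) :
    x ^ n * y ^ m < y ^ n * x ^ m := by
  obtain ⟨d, rfl⟩ := Nat.exists_eq_add_of_lt hmn
  have hy : 0 < y := hx.trans hxy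
  calc x ^ (m + d + 1) * y ^ m = (x * y) ^ m * x ^ (d + 1) := by ring
    _ < (x * y) ^ m * y ^ (d + 1) := by gcongr
    _ = y ^ (m + d + 1) * x ^ m := by ring

theorem strictMonoOn_pow_div_sum_mul_pow {s : Finset ℕ} (hs : s.Nonempty) {c : ℕ → ℝ}
    (hc : ∀ m ∈ s, 0 < c m) {n : ℕ} (hn : ∀ m ∈ s, m < n) :
    StrictMonoOn (fun A : ℝ => A ^ n / ∑ m ∈ s, c m * A ^ m) (Set.Ioi 0) := by
  intro x (hx : 0 < x) y (hy : 0 < y) hxy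
  have hsum_pos {A : ℝ} (hA : 0 < A) : 0 < ∑ m ∈ s, c m * A ^ m :=
    sum_pos (fun m hm => mul_pos (hc m hm) (pow_pos hA m)) hs
  rw [div_lt_div_iff₀ (hsum_pos hx) (hsum_pos hy), mul_sum, mul_sum]
  refine sum_lt_sum_of_nonempty hs fun m hm => ?_
  calc x ^ n * (c m * y ^ m) = c m * (x ^ n * y ^ m) := by ring
    _ < c m * (y ^ n * x ^ m) :=
      mul_lt_mul_of_pos_left (pow_mul_pow_lt_pow_mul_pow hx hxy (hn m hm)) (hc m hm)
    _ = y ^ n * (c m * x ^ m) := by ring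

theorem mul_erlangB_eq (k : ℕ) (A : ℝ) :
    A * ErlangB k A =
      A ^ (k + 1) / ∑ m ∈ range (k + 1), (k.factorial / m.factorial : ℝ) * A ^ m := by
  have hsum : ∑ m ∈ range (k + 1), (k.factorial / m.factorial : ℝ) * A ^ m =
      k.factorial * ∑ m ∈ range (k + 1), A ^ m / m.factorial := by
    rw [mul_sum]
    exact sum_congr rfl fun m _ => by ring
  rw [ErlangB, hsum, pow_succ]
  field_simp

theorem lostTraffic_strictMonoOn_general (k : ℕ) :
    StrictMonoOn (fun A : ℝ => A * ErlangB k A) (Set.Ioi 0) := by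
  simp only [mul_erlangB_eq]
  exact strictMonoOn_pow_div_sum_mul_pow nonempty_range_add_one
    (fun m _ => by positivity) fun m hm => mem_range.mp hm

theorem lostTraffic_strictMonoOn (k : ℕ) (hk : 1 ≤ k) :
    StrictMonoOn (fun A : ℝ => A * ErlangB k A) (Set.Ioi 0) :=
  lostTraffic_strictMonoOn_general k
end

section
/- For fixed k ≥ 1, the Erlang B function A ↦ E_k(A) is strictly increasing on (0,∞). -/
/-! After clearing denominators, `E_k(a) < E_k(b)` becomes
`a^k ∑_{m ≤ k} b^m/m! < b^k ∑_{m ≤ k} a^m/m!`, which holds termwise since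
`a^k b^m ≤ b^k a^m` for `m ≤ k`, strictly for `m = 0` because `k ≥ 1`. -/

open Finset

theorem pow_mul_pow_le_pow_mul_pow {R : Type*} [CommSemiring R] [PartialOrder R]
    [IsOrderedRing R] {a b : R} (ha : 0 ≤ a) (hab : a ≤ b) {m k : ℕ} (hmk : m ≤ k) :
    a ^ k * b ^ m ≤ b ^ k * a ^ m := by
  obtain ⟨j, rfl⟩ := Nat.exists_eq_add_of_le hmk
  calc a ^ (m + j) * b ^ m = a ^ j * (a ^ m * b ^ m) := by ring
    _ ≤ b ^ j * (a ^ m * b ^ m) := by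
      gcongr
      exact mul_nonneg (pow_nonneg ha m) (pow_nonneg (ha.trans hab) m)
    _ = b ^ (m + j) * a ^ m := by ring

theorem sum_range_pow_div_factorial_pos {A : ℝ} (hA : 0 ≤ A) (k : ℕ) :
    0 < ∑ m ∈ range (k + 1), A ^ m / (m.factorial : ℝ) :=
  sum_pos' (fun m _ => by positivity) ⟨0, by simp⟩

theorem pow_mul_sum_range_pow_div_factorial_lt {a b : ℝ} (ha : 0 ≤ a) (hab : a < b)
    {k : ℕ} (hk : 1 ≤ k) :
    a ^ k * ∑ m ∈ range (k + 1), b ^ m / (m.factorial : ℝ)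
      < b ^ k * ∑ m ∈ range (k + 1), a ^ m / (m.factorial : ℝ) := by
  simp only [mul_sum, mul_div_assoc']
  refine sum_lt_sum (fun m hm => ?_) ⟨0, by simp, ?_⟩
  · refine div_le_div_of_nonneg_right ?_ (by positivity)
    exact pow_mul_pow_le_pow_mul_pow ha hab.le (Nat.lt_succ_iff.mp (mem_range.mp hm))
  · simpa using pow_lt_pow_left₀ hab ha (by omega)

theorem erlangB_strictMonoOn (k : ℕ) (hk : 1 ≤ k) :
    StrictMonoOn (fun A : ℝ => ErlangB k A) (Set.Ioi 0) := by
  intro a ha b _ hab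
  have ha₀ : 0 ≤ a := le_of_lt ha
  have hfact : (0 : ℝ) < k.factorial := by positivity
  simp only [ErlangB]
  rw [div_lt_div_iff₀ (sum_range_pow_div_factorial_pos ha₀ k)
      (sum_range_pow_div_factorial_pos (ha₀.trans hab.le) k),
    div_mul_eq_mul_div, div_mul_eq_mul_div, div_lt_div_iff_of_pos_right hfact]
  exact pow_mul_sum_range_pow_div_factorial_lt ha₀ hab hk
end

section
/- In a preemptive-priority loss system with p classes of offered traffic A_1, ..., A_p > 0, the lost traffic of class i defined by A_L(i) = Â_i·E_k(Â_i) − Â_{i−1}·E_k(Â_{i−1}) (where Â_i = A_1 + ... + A_i and Â_0 = 0) is strictly positive for every i with 1 ≤ i ≤ p and k ≥ 1. -/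
/-! The carried traffic `x ↦ x * E_k(x) = x ^ (k + 1) / (k! * ∑_{m ≤ k} x ^ m / m!)` is strictly
increasing on `[0, ∞)`, because the denominator has degree `k < k + 1` and nonnegative
coefficients. Since `Â_{i-1} < Â_i`, the lost traffic `A_L(i)` is positive. -/

open Finset

lemma sum_pow_div_factorial_pos (k : ℕ) {x : ℝ} (hx : 0 ≤ x) :
    0 < ∑ m ∈ range (k + 1), x ^ m / (m.factorial : ℝ) :=
  sum_pos' (fun m _ => by positivity) ⟨0, mem_range.2 k.succ_pos, by simp⟩

lemma mul_ErlangB (k : ℕ) (x : ℝ) :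
    x * ErlangB k x =
      x ^ (k + 1) / (k.factorial : ℝ) / ∑ m ∈ range (k + 1), x ^ m / (m.factorial : ℝ) := by
  rw [ErlangB, pow_succ', ← mul_div_assoc, ← mul_div_assoc]

lemma pow_succ_mul_sum_lt (k : ℕ) {a b : ℝ} (ha : 0 ≤ a) (hab : a < b) :
    a ^ (k + 1) * ∑ m ∈ range (k + 1), b ^ m / (m.factorial : ℝ)
      < b ^ (k + 1) * ∑ m ∈ range (k + 1), a ^ m / (m.factorial : ℝ) := by
  rw [mul_sum, mul_sum]
  refine sum_lt_sum (fun m hm => ?_) ⟨0, mem_range.2 k.succ_pos, ?_⟩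
  · obtain ⟨d, hkd⟩ := Nat.exists_eq_add_of_le (mem_range.1 hm).le
    have hd : a ^ d ≤ b ^ d := pow_le_pow_left₀ ha hab.le d
    rw [hkd, pow_add, pow_add, mul_div_assoc', mul_div_assoc']
    gcongr ?_ / _
    have hbm : 0 ≤ b ^ m := pow_nonneg (ha.trans hab.le) m
    calc a ^ m * a ^ d * b ^ m ≤ a ^ m * b ^ d * b ^ m := by gcongr
      _ = b ^ m * b ^ d * a ^ m := by ring
  · simpa using pow_lt_pow_left₀ hab ha k.succ_ne_zero

theorem strictMonoOn_mul_ErlangB (k : ℕ) :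
    StrictMonoOn (fun x => x * ErlangB k x) (Set.Ici 0) := by
  intro a ha b _ hab
  have hSa := sum_pow_div_factorial_pos k (Set.mem_Ici.1 ha)
  have hSb := sum_pow_div_factorial_pos k (Set.mem_Ici.1 ha |>.trans hab.le)
  simp only [mul_ErlangB]
  rw [div_lt_div_iff₀ hSa hSb, div_mul_eq_mul_div, div_mul_eq_mul_div,
    div_lt_div_iff_of_pos_right (by positivity)]
  exact pow_succ_mul_sum_lt k (Set.mem_Ici.1 ha) hab

theorem lostTraffic_pos_general (p k : ℕ) (A : ℕ → ℝ)
    (hA : ∀ i, 1 ≤ i → i ≤ p → 0 < A i) :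
    ∀ i, 1 ≤ i → i ≤ p →
      0 < (∑ j ∈ Finset.Icc 1 i, A j) * ErlangB k (∑ j ∈ Finset.Icc 1 i, A j)
          - (∑ j ∈ Finset.Icc 1 (i - 1), A j) * ErlangB k (∑ j ∈ Finset.Icc 1 (i - 1), A j) := by
  intro i hi hip
  obtain ⟨n, rfl⟩ := Nat.exists_eq_add_of_le' hi
  rw [Nat.add_sub_cancel, sum_Icc_succ_top (by omega)]
  have hprev : 0 ≤ ∑ j ∈ Icc 1 n, A j :=
    sum_nonneg fun j hj => (hA j (mem_Icc.1 hj).1 (by grind)).le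
  have hlt := lt_add_of_pos_right (∑ j ∈ Icc 1 n, A j) (hA _ hi hip)
  exact sub_pos.2 (strictMonoOn_mul_ErlangB k hprev (hprev.trans hlt.le) hlt)

theorem lostTraffic_pos (p k : ℕ) (hk : 1 ≤ k) (A : ℕ → ℝ)
    (hA : ∀ i, 1 ≤ i → i ≤ p → 0 < A i) :
    ∀ i, 1 ≤ i → i ≤ p →
      0 < (∑ j ∈ Finset.Icc 1 i, A j) * ErlangB k (∑ j ∈ Finset.Icc 1 i, A j)
          - (∑ j ∈ Finset.Icc 1 (i - 1), A j) * ErlangB k (∑ j ∈ Finset.Icc 1 (i - 1), A j) :=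
  lostTraffic_pos_general p k A hA
end

section
/- For a p-class preemptive priority loss system with k servers, the blocking probability P_b(i) = [Â_i·E_k(Â_i) − Â_{i−1}·E_k(Â_{i−1})] / A_i of each class i satisfies 0 < P_b(i) < 1 whenever all A_j > 0 and k ≥ 1. -/
open Finset

/-!
Write `w_m(A) = A^m / m!`, so that `E_k(A) = w_k / ∑_{m ≤ k} w_m` and, with `x = Â_{i-1}`,
`y = Â_i = x + A_i`, `P_b(i) = (y E_k(y) - x E_k(x)) / A_i`. Positivity is strict monotonicity of
the lost traffic `A E_k(A)`; `P_b(i) < 1` is strict monotonicity of the carried traffic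
`A - A E_k(A)`, which is the mean of the Poisson law truncated to `{0, …, k}`. Both follow from
the fact that the ratio `w_m(y) / w_m(x) = (y / x)^m` increases with `m`: the first termwise, the
second by a weighted Chebyshev sum inequality.
-/

theorem sum_mul_sum_lt_of_monotone_of_cross {ι : Type*} [LinearOrder ι] {s : Finset ι}
    {f p q : ι → ℝ} (hf : Monotone f) (hpq : ∀ m ∈ s, ∀ n ∈ s, n ≤ m → p m * q n ≤ p n * q m)
    {a b : ι} (ha : a ∈ s) (hb : b ∈ s) (hfab : f b < f a) (hab : p a * q b < p b * q a) :
    (∑ i ∈ s, f i * p i) * ∑ i ∈ s, q i < (∑ i ∈ s, f i * q i) * ∑ i ∈ s, p i := by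
  have hterm : ∀ m ∈ s, ∀ n ∈ s, 0 ≤ (f m - f n) * (p n * q m - p m * q n) := by
    intro m hm n hn
    rcases le_total n m with h | h
    · exact mul_nonneg (sub_nonneg.2 (hf h)) (sub_nonneg.2 (hpq m hm n hn h))
    · exact mul_nonneg_of_nonpos_of_nonpos (sub_nonpos.2 (hf h))
        (sub_nonpos.2 (hpq n hn m hm h))
  have hpos : 0 < ∑ m ∈ s, ∑ n ∈ s, (f m - f n) * (p n * q m - p m * q n) :=
    calc 0 < (f a - f b) * (p b * q a - p a * q b) := mul_pos (by linarith) (by linarith)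
      _ ≤ ∑ n ∈ s, (f a - f n) * (p n * q a - p a * q n) :=
        single_le_sum (hterm a ha) hb
      _ ≤ _ := single_le_sum (fun m hm => sum_nonneg (hterm m hm)) ha
  have hsymm : ∑ m ∈ s, ∑ n ∈ s, (f m - f n) * (p n * q m - p m * q n)
      = 2 * ((∑ i ∈ s, f i * q i) * ∑ i ∈ s, p i - (∑ i ∈ s, f i * p i) * ∑ i ∈ s, q i) := by
    simp only [sum_mul_sum, mul_sub, sub_mul, sum_sub_distrib, two_mul]
    rw [sum_comm (s := s) (t := s) (f := fun m n => f n * (p n * q m)),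
      sum_comm (s := s) (t := s) (f := fun m n => f n * (p m * q n))]
    simp only [mul_comm, mul_left_comm]
    ring
  linarith

noncomputable def poissonWeight (A : ℝ) (m : ℕ) : ℝ := A ^ m / (Nat.factorial m : ℝ)

lemma poissonWeight_nonneg {A : ℝ} (hA : 0 ≤ A) (m : ℕ) : 0 ≤ poissonWeight A m := by
  unfold poissonWeight; positivity

@[simp]
lemma poissonWeight_zero (A : ℝ) : poissonWeight A 0 = 1 := by
  simp [poissonWeight]

lemma succ_mul_poissonWeight_succ (A : ℝ) (m : ℕ) :
    (m + 1 : ℝ) * poissonWeight A (m + 1) = A * poissonWeight A m := by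
  unfold poissonWeight
  rw [Nat.factorial_succ, Nat.cast_mul, Nat.cast_succ, pow_succ]
  field_simp

lemma poissonWeight_lt_poissonWeight {x y : ℝ} (hx : 0 ≤ x) (hxy : x < y) {m : ℕ} (hm : m ≠ 0) :
    poissonWeight x m < poissonWeight y m := by
  unfold poissonWeight
  gcongr

lemma poissonWeight_mul_le_mul {x y : ℝ} (hx : 0 ≤ x) (hxy : x ≤ y) {m n : ℕ} (hnm : n ≤ m) :
    poissonWeight x m * poissonWeight y n ≤ poissonWeight x n * poissonWeight y m := by
  obtain ⟨d, rfl⟩ := Nat.exists_eq_add_of_le hnm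
  have hy := hx.trans hxy
  unfold poissonWeight
  rw [div_mul_div_comm, div_mul_div_comm, mul_comm (Nat.factorial (n + d) : ℝ)]
  gcongr ?_ / _
  calc x ^ (n + d) * y ^ n = x ^ n * y ^ n * x ^ d := by ring
    _ ≤ x ^ n * y ^ n * y ^ d := by gcongr
    _ = x ^ n * y ^ (n + d) := by ring

lemma sum_poissonWeight_pos (k : ℕ) {A : ℝ} (hA : 0 ≤ A) :
    0 < ∑ m ∈ range (k + 1), poissonWeight A m := by
  rw [sum_range_succ']
  simp only [poissonWeight_zero]
  have := sum_nonneg fun m (_ : m ∈ range k) => poissonWeight_nonneg hA (m + 1)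
  linarith

lemma ErlangB_eq (k : ℕ) (A : ℝ) :
    ErlangB k A = poissonWeight A k / ∑ m ∈ range (k + 1), poissonWeight A m := rfl

lemma ErlangB_pos (k : ℕ) {A : ℝ} (hA : 0 < A) : 0 < ErlangB k A := by
  unfold ErlangB; positivity

lemma ErlangB_strictMonoOn {k : ℕ} (hk : k ≠ 0) : StrictMonoOn (ErlangB k) (Set.Ici 0) := by
  intro x hx y hy hxy
  rw [ErlangB_eq, ErlangB_eq,
    div_lt_div_iff₀ (sum_poissonWeight_pos k hx) (sum_poissonWeight_pos k hy), mul_sum, mul_sum]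
  refine sum_lt_sum (fun m hm => ?_) ⟨0, by simp, ?_⟩
  · rw [mul_comm (poissonWeight y k)]
    exact poissonWeight_mul_le_mul hx hxy.le (Nat.lt_succ_iff.1 (mem_range.1 hm))
  · simpa using poissonWeight_lt_poissonWeight hx hxy hk

lemma mul_ErlangB_strictMonoOn {k : ℕ} (hk : k ≠ 0) :
    StrictMonoOn (fun A => A * ErlangB k A) (Set.Ici 0) := by
  intro x (hx : 0 ≤ x) y hy hxy
  calc x * ErlangB k x ≤ x * ErlangB k y :=
        mul_le_mul_of_nonneg_left (ErlangB_strictMonoOn hk hx hy hxy).le hx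
    _ < y * ErlangB k y := mul_lt_mul_of_pos_right hxy (ErlangB_pos k (hx.trans_lt hxy))

lemma sub_mul_ErlangB_eq (k : ℕ) {A : ℝ} (hA : 0 ≤ A) :
    A - A * ErlangB k A = (∑ m ∈ range (k + 1), (m : ℝ) * poissonWeight A m) /
      ∑ m ∈ range (k + 1), poissonWeight A m := by
  have hS := (sum_poissonWeight_pos k hA).ne'
  rw [ErlangB_eq, eq_div_iff hS, sub_mul, mul_assoc, div_mul_cancel₀ _ hS,
    sum_range_succ (poissonWeight A), sum_range_succ' (fun m => (m : ℝ) * poissonWeight A m)]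
  simp only [Nat.cast_add, Nat.cast_one, succ_mul_poissonWeight_succ, Nat.cast_zero, zero_mul,
    add_zero, ← mul_sum]
  ring

lemma sub_mul_ErlangB_strictMonoOn {k : ℕ} (hk : k ≠ 0) :
    StrictMonoOn (fun A => A - A * ErlangB k A) (Set.Ici 0) := by
  intro x (hx : 0 ≤ x) y (hy : 0 ≤ y) hxy
  change x - x * ErlangB k x < y - y * ErlangB k y
  rw [sub_mul_ErlangB_eq k hx, sub_mul_ErlangB_eq k hy,
    div_lt_div_iff₀ (sum_poissonWeight_pos k hx) (sum_poissonWeight_pos k hy)]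
  refine sum_mul_sum_lt_of_monotone_of_cross (a := 1) (b := 0) Nat.mono_cast
    (fun m _ n _ hnm => poissonWeight_mul_le_mul hx hxy.le hnm) (mem_range.2 (by omega))
    (mem_range.2 k.succ_pos) (by norm_num) ?_
  simpa using poissonWeight_lt_poissonWeight hx hxy one_ne_zero

theorem blockingProb_pos_lt_one (p k : ℕ) (hk : 1 ≤ k) (A : ℕ → ℝ)
    (hA : ∀ j, 1 ≤ j → j ≤ p → 0 < A j) (i : ℕ) (hi1 : 1 ≤ i) (hip : i ≤ p) :
    0 < ((∑ j ∈ Finset.Icc 1 i, A j) * ErlangB k (∑ j ∈ Finset.Icc 1 i, A j)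
          - (∑ j ∈ Finset.Icc 1 (i - 1), A j) * ErlangB k (∑ j ∈ Finset.Icc 1 (i - 1), A j)) / A i ∧
    ((∑ j ∈ Finset.Icc 1 i, A j) * ErlangB k (∑ j ∈ Finset.Icc 1 i, A j)
          - (∑ j ∈ Finset.Icc 1 (i - 1), A j) * ErlangB k (∑ j ∈ Finset.Icc 1 (i - 1), A j)) / A i < 1 := by
  have hAi : 0 < A i := hA i hi1 hip
  have hx : 0 ≤ ∑ j ∈ Icc 1 (i - 1), A j :=
    sum_nonneg fun j hj => (hA j (mem_Icc.1 hj).1 (by grind)).le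
  have hy : ∑ j ∈ Icc 1 i, A j = ∑ j ∈ Icc 1 (i - 1), A j + A i := by
    obtain ⟨n, rfl⟩ := Nat.exists_eq_add_of_le' hi1
    exact sum_Icc_succ_top (by omega) A
  generalize ∑ j ∈ Icc 1 (i - 1), A j = x at hx hy
  rw [hy, div_lt_one hAi, lt_div_iff₀ hAi, zero_mul, sub_pos]
  have hxy : x < x + A i := by linarith
  have hk0 : k ≠ 0 := by omega
  have hlost : x * ErlangB k x < (x + A i) * ErlangB k (x + A i) :=
    mul_ErlangB_strictMonoOn hk0 hx (hx.trans hxy.le) hxy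
  have hcarried : x - x * ErlangB k x < x + A i - (x + A i) * ErlangB k (x + A i) :=
    sub_mul_ErlangB_strictMonoOn hk0 hx (hx.trans hxy.le) hxy
  constructor <;> linarith
end

section
/- In the 2-server, 2-priority preemptive loss system at steady state, the probability that both servers are busy equals the Erlang B value for the combined load: π_{2,0} + π_{1,1} + π_{0,2} = ((A_1+A_2)²/2) / (1 + (A_1+A_2) + (A_1+A_2)²/2), where A_n = λ_n/μ. -/
/-! Preemption only decides *which* customers are in service, never *how many*: lumping the states by
the number of busy servers, the balance equations summed over each level are the cut equations
`Λ p_k = (k + 1) μ p_{k+1}` of the Erlang loss system with arrival rate `Λ = λ₁ + λ₂`, whose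
stationary law is the truncated Poisson distribution with parameter `Λ / μ`. -/

open Finset Nat

noncomputable def erlangB (c : ℕ) (A : ℝ) : ℝ :=
  (A ^ c / c !) / ∑ k ∈ range (c + 1), A ^ k / k !

theorem erlangB_two (A : ℝ) : erlangB 2 A = (A ^ 2 / 2) / (1 + A + A ^ 2 / 2) := by
  simp [erlangB, sum_range_succ]

theorem eq_pow_div_factorial_of_cut_equations {c : ℕ} {Λ μ : ℝ} (hμ : μ ≠ 0) (p : Fin (c + 1) → ℝ)
    (hcut : ∀ k : Fin c, Λ * p k.castSucc = (k + 1) * μ * p k.succ) (k : Fin (c + 1)) :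
    p k = p 0 * ((Λ / μ) ^ (k : ℕ) / (k : ℕ)!) := by
  induction k using Fin.induction with
  | zero => simp
  | succ k ih =>
    have hk : ((k : ℕ) + 1 : ℝ) ≠ 0 := by positivity
    have hstep : p k.succ = Λ / μ / (k + 1) * p k.castSucc := by
      field_simp
      linear_combination -(hcut k)
    rw [hstep, ih, Fin.val_succ, Fin.val_castSucc, factorial_succ, pow_succ]
    push_cast
    field_simp

theorem eq_erlangB_of_cut_equations {c : ℕ} {Λ μ : ℝ} (hμ : μ ≠ 0) (p : Fin (c + 1) → ℝ)
    (hcut : ∀ k : Fin c, Λ * p k.castSucc = (k + 1) * μ * p k.succ) (hsum : ∑ k, p k = 1) :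
    p (Fin.last c) = erlangB c (Λ / μ) := by
  have hp := eq_pow_div_factorial_of_cut_equations hμ p hcut
  have hnorm : p 0 * ∑ k ∈ range (c + 1), (Λ / μ) ^ k / k ! = 1 := by
    rw [← hsum, mul_sum, ← Fin.sum_univ_eq_sum_range]
    exact sum_congr rfl fun k _ => (hp k).symm
  have hS : ∑ k ∈ range (c + 1), (Λ / μ) ^ k / k ! ≠ 0 := right_ne_zero_of_mul_eq_one hnorm
  rw [hp, erlangB, Fin.val_last, eq_div_iff hS]
  linear_combination (Λ / μ) ^ c / c ! * hnorm

theorem two_server_all_busy_general (lam1 lam2 μ : ℝ) (hμ : 0 < μ)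
    (π00 π01 π02 π10 π11 π20 : ℝ)
    (e1 : π00 * (lam1 + lam2) = π10 * μ + π01 * μ)
    (e2 : π01 * (lam1 + lam2 + μ) = π02 * (2 * μ) + π11 * μ + π00 * lam2)
    (e5 : π10 * (lam1 + lam2 + μ) = π11 * μ + π20 * (2 * μ) + π00 * lam1)
    (e7 : π20 + π10 + π00 + π11 + π01 + π02 = 1) :
    π20 + π11 + π02 =
      ((lam1 / μ + lam2 / μ) ^ 2 / 2) /
        (1 + (lam1 / μ + lam2 / μ) + (lam1 / μ + lam2 / μ) ^ 2 / 2) := by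
  set p : Fin 3 → ℝ := ![π00, π01 + π10, π20 + π11 + π02]
  have hcut : ∀ k : Fin 2, (lam1 + lam2) * p k.castSucc = (k + 1) * μ * p k.succ := by
    refine Fin.forall_fin_two.2 ⟨?_, ?_⟩
    · show (lam1 + lam2) * π00 = ((0 : ℕ) + 1 : ℝ) * μ * (π01 + π10)
      linear_combination e1
    · show (lam1 + lam2) * (π01 + π10) = ((1 : ℕ) + 1 : ℝ) * μ * (π20 + π11 + π02)
      linear_combination e2 + e5 + e1
  have hsum : ∑ k, p k = 1 := by
    rw [Fin.sum_univ_three]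
    show π00 + (π01 + π10) + (π20 + π11 + π02) = 1
    linear_combination e7
  have h := eq_erlangB_of_cut_equations hμ.ne' p hcut hsum
  rwa [erlangB_two, add_div] at h

theorem two_server_all_busy (lam1 lam2 μ : ℝ) (hlam1 : 0 < lam1) (hlam2 : 0 < lam2) (hμ : 0 < μ)
    (π00 π01 π02 π10 π11 π20 : ℝ)
    (hnn : 0 ≤ π00 ∧ 0 ≤ π01 ∧ 0 ≤ π02 ∧ 0 ≤ π10 ∧ 0 ≤ π11 ∧ 0 ≤ π20)
    (e1 : π00 * (lam1 + lam2) = π10 * μ + π01 * μ)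
    (e2 : π01 * (lam1 + lam2 + μ) = π02 * (2 * μ) + π11 * μ + π00 * lam2)
    (e3 : π02 * (lam1 + 2 * μ) = π01 * lam2)
    (e4 : π11 * (lam1 + μ) = π10 * lam2 + π02 * lam1)
    (e5 : π10 * (lam1 + lam2 + μ) = π11 * μ + π20 * (2 * μ) + π00 * lam1)
    (e6 : π20 * (2 * μ) = π11 * lam1 + π10 * lam1)
    (e7 : π20 + π10 + π00 + π11 + π01 + π02 = 1) :
    π20 + π11 + π02 =
      ((lam1 / μ + lam2 / μ) ^ 2 / 2) /
        (1 + (lam1 / μ + lam2 / μ) + (lam1 / μ + lam2 / μ) ^ 2 / 2) :=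
  two_server_all_busy_general lam1 lam2 μ hμ π00 π01 π02 π10 π11 π20 e1 e2 e5 e7
end

section
/- In the 2-server, 2-priority preemptive loss system, the class-2 blocking probability defined by P_b(2) = (π_{2,0}+π_{1,1}+π_{0,2}) + (λ_1/λ_2)(π_{1,1}+π_{0,2}) equals ((A_1+A_2)E_2(A_1+A_2) − A_1E_2(A_1))/A_2, where A_n = λ_n/μ and E_2 is the Erlang B formula with 2 servers. -/
noncomputable def E2 (A : ℝ) : ℝ := (A ^ 2 / 2) / (1 + A + A ^ 2 / 2)

/-!
Summing the balance equations over the cuts between occupancy levels shows that both the total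
number of busy servers and, since class 1 preempts class 2 and so never sees it, the number of
class-1 customers in service are birth–death processes on `{0, 1, 2}` with the cut equations of
an M/M/2/2 queue, at loads `A₁ + A₂` and `A₁` respectively. Hence `π₂₀ + π₁₁ + π₀₂ = E₂(A₁ + A₂)`
and `π₂₀ = E₂(A₁)`, and the blocking formula is an algebraic identity in these two quantities.
-/

theorem eq_E2_of_cut_equations {lam μ p₀ p₁ p₂ : ℝ} (hμ : μ ≠ 0)
    (h₀₁ : μ * p₁ = lam * p₀) (h₁₂ : 2 * μ * p₂ = lam * p₁) (hsum : p₀ + p₁ + p₂ = 1) :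
    p₂ = E2 (lam / μ) := by
  have hden : 0 < 1 + lam / μ + (lam / μ) ^ 2 / 2 := by nlinarith [sq_nonneg (lam / μ + 1)]
  rw [E2, eq_div_iff hden.ne']
  field_simp
  linear_combination (μ + lam) * h₁₂ + lam * h₀₁ + lam ^ 2 * hsum

theorem two_server_class2_blocking_general (lam1 lam2 μ : ℝ) (hlam2 : 0 < lam2) (hμ : 0 < μ)
    (π00 π01 π02 π10 π11 π20 : ℝ)
    (e1 : π00 * (lam1 + lam2) = π10 * μ + π01 * μ)
    (e2 : π01 * (lam1 + lam2 + μ) = π02 * (2 * μ) + π11 * μ + π00 * lam2)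
    (e3 : π02 * (lam1 + 2 * μ) = π01 * lam2)
    (e5 : π10 * (lam1 + lam2 + μ) = π11 * μ + π20 * (2 * μ) + π00 * lam1)
    (e6 : π20 * (2 * μ) = π11 * lam1 + π10 * lam1)
    (e7 : π20 + π10 + π00 + π11 + π01 + π02 = 1) :
    (π20 + π11 + π02) + (lam1 / lam2) * (π11 + π02) =
      ((lam1 / μ + lam2 / μ) * E2 (lam1 / μ + lam2 / μ) - (lam1 / μ) * E2 (lam1 / μ)) / (lam2 / μ) := by
  have htotal : π20 + π11 + π02 = E2 (lam1 / μ + lam2 / μ) := by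
    rw [← add_div]
    exact eq_E2_of_cut_equations (p₀ := π00) (p₁ := π10 + π01) hμ.ne'
      (by linear_combination -e1) (by linear_combination -e2 - e5 - e1) (by linarith)
  have hclass1 : π20 = E2 (lam1 / μ) :=
    eq_E2_of_cut_equations (p₀ := π00 + π01 + π02) (p₁ := π10 + π11) hμ.ne'
      (by linear_combination -e1 - e2 - e3) (by linear_combination e6) (by linarith)
  rw [← htotal, ← hclass1]
  field_simp
  ring

theorem two_server_class2_blocking (lam1 lam2 μ : ℝ) (hlam1 : 0 < lam1) (hlam2 : 0 < lam2) (hμ : 0 < μ)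
    (π00 π01 π02 π10 π11 π20 : ℝ)
    (hnn : 0 ≤ π00 ∧ 0 ≤ π01 ∧ 0 ≤ π02 ∧ 0 ≤ π10 ∧ 0 ≤ π11 ∧ 0 ≤ π20)
    (e1 : π00 * (lam1 + lam2) = π10 * μ + π01 * μ)
    (e2 : π01 * (lam1 + lam2 + μ) = π02 * (2 * μ) + π11 * μ + π00 * lam2)
    (e3 : π02 * (lam1 + 2 * μ) = π01 * lam2)
    (e4 : π11 * (lam1 + μ) = π10 * lam2 + π02 * lam1)
    (e5 : π10 * (lam1 + lam2 + μ) = π11 * μ + π20 * (2 * μ) + π00 * lam1)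
    (e6 : π20 * (2 * μ) = π11 * lam1 + π10 * lam1)
    (e7 : π20 + π10 + π00 + π11 + π01 + π02 = 1) :
    (π20 + π11 + π02) + (lam1 / lam2) * (π11 + π02) =
      ((lam1 / μ + lam2 / μ) * E2 (lam1 / μ + lam2 / μ) - (lam1 / μ) * E2 (lam1 / μ)) / (lam2 / μ) :=
  two_server_class2_blocking_general lam1 lam2 μ hlam2 hμ π00 π01 π02 π10 π11 π20 e1 e2 e3 e5 e6 e7
end

section
/- In the k-server, 2-priority preemptive loss system, the aggregate process (total number of busy servers) determined by the stationary distribution satisfies ∑_{i+j=n} π_{i,j} = ((A_1+A_2)^n/n!) / (∑_{m=0}^k (A_1+A_2)^m/m!) for every 0 ≤ n ≤ k, given that the π_{i,j} satisfy the global balance equations. -/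
/-!
Summing the balance equations of the non-congestion states over a level `i + j = m` shows
that the number of busy servers obeys the balance equations of the `M/M/k/k` birth–death chain
with arrival rate `λ₁ + λ₂` and service rate `μ` per server: preemption only moves mass inside
a level. Starting from the empty level `-1`, induction on `m` turns these into the cut equations
`(λ₁ + λ₂) P m = (m + 1) μ P (m + 1)`, so `P m ∝ A ^ m / m !`, and normalization gives the Erlang
distribution.
-/

open Finset
open scoped Nat

/-- `Icc 0 n` is empty for `n < 0`, so `levelMass π (-1) = 0`. -/
noncomputable def levelMass (π : ℤ → ℤ → ℝ) (n : ℤ) : ℝ := ∑ i ∈ Icc 0 n, π i (n - i)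

lemma sum_Icc_add {M : Type*} [AddCommMonoid M] (f : ℤ → M) (a b c : ℤ) :
    ∑ i ∈ Icc a b, f (i + c) = ∑ i ∈ Icc (a + c) (b + c), f i := by
  rw [← map_add_right_Icc, sum_map]
  rfl

section LevelMass

variable {π : ℤ → ℤ → ℝ}

@[simp]
lemma levelMass_neg_one : levelMass π (-1) = 0 := by
  simp [levelMass]

lemma levelMass_natCast (n : ℕ) : levelMass π n = ∑ i ∈ range (n + 1), π i (n - i) := by
  rw [levelMass, Int.Icc_eq_finset_map, sum_map]
  simp

lemma sum_range_levelMass (k : ℕ) :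
    ∑ n ∈ range (k + 1), levelMass π n = ∑ i ∈ range (k + 1), ∑ j ∈ range (k + 1 - i), π i j := by
  rw [← sum_range_diag_flip]
  refine sum_congr rfl fun n _ => ?_
  rw [levelMass_natCast]
  refine sum_congr rfl fun i hi => ?_
  rw [Nat.cast_sub (Nat.lt_succ_iff.mp (mem_range.mp hi))]

lemma sum_Icc_eq_levelMass (hπ : ∀ i j, i < 0 ∨ j < 0 → π i j = 0) {a b n : ℤ} (ha : a ≤ 0)
    (hb : n ≤ b) : ∑ i ∈ Icc a b, π i (n - i) = levelMass π n := by
  refine (sum_subset (Icc_subset_Icc ha hb) fun i _ hi => hπ _ _ ?_).symm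
  rw [mem_Icc] at hi
  omega

lemma sum_Icc_sub_one_left (hπ : ∀ i j, i < 0 ∨ j < 0 → π i j = 0) (m : ℤ) :
    ∑ i ∈ Icc 0 m, π (i - 1) (m - i) = levelMass π (m - 1) := by
  rw [← sum_Icc_eq_levelMass hπ (a := 0 + -1) (b := m + -1) (by norm_num) (by omega),
    ← sum_Icc_add (fun i => π i (m - 1 - i))]
  refine sum_congr rfl fun i _ => ?_
  congr 1; ring

lemma sum_Icc_sub_one_right (hπ : ∀ i j, i < 0 ∨ j < 0 → π i j = 0) (m : ℤ) :
    ∑ i ∈ Icc 0 m, π i (m - i - 1) = levelMass π (m - 1) := by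
  rw [← sum_Icc_eq_levelMass hπ le_rfl (by omega : m - 1 ≤ m)]
  simp only [sub_right_comm]

/-- Class-1 and class-2 departures out of level `m + 1` together occur at `m + 1` times the
per-server rate; the boundary states enter with weight `0`. -/
lemma mul_levelMass_add_one {m : ℤ} (hm : 0 ≤ m) :
    (m + 1 : ℝ) * levelMass π (m + 1) =
      ∑ i ∈ Icc 0 m, ((i + 1 : ℤ) : ℝ) * π (i + 1) (m - i) +
        ∑ i ∈ Icc 0 m, ((m - i + 1 : ℤ) : ℝ) * π i (m - i + 1) := by
  have hfirst : ∑ i ∈ Icc 0 m, ((i + 1 : ℤ) : ℝ) * π (i + 1) (m - i)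
      = ∑ i ∈ Icc 0 (m + 1), (i : ℝ) * π i (m + 1 - i) := by
    rw [← insert_Icc_add_one_left_eq_Icc (show (0 : ℤ) ≤ m + 1 by omega), sum_insert (by simp),
      ← sum_Icc_add (fun i => (i : ℝ) * π i (m + 1 - i))]
    simp only [Int.cast_zero, zero_mul, zero_add]
    refine sum_congr rfl fun i _ => ?_
    congr 2; ring
  have hsecond : ∑ i ∈ Icc 0 m, ((m - i + 1 : ℤ) : ℝ) * π i (m - i + 1)
      = ∑ i ∈ Icc 0 (m + 1), ((m + 1 - i : ℤ) : ℝ) * π i (m + 1 - i) := by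
    rw [← insert_Icc_right_eq_Icc_add_one (show (0 : ℤ) ≤ m + 1 by omega), sum_insert (by simp)]
    simp only [sub_self, Int.cast_zero, zero_mul, zero_add]
    refine sum_congr rfl fun i _ => ?_
    congr 2 <;> ring
  rw [hfirst, hsecond, ← sum_add_distrib, levelMass, mul_sum]
  refine sum_congr rfl fun i _ => ?_
  push_cast
  ring

lemma levelMass_balance (hπ : ∀ i j, i < 0 ∨ j < 0 → π i j = 0) {lam1 lam2 mu : ℝ} {m : ℤ}
    (hm : 0 ≤ m)
    (hbal : ∀ i j : ℤ, 0 ≤ i → 0 ≤ j → i + j = m →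
      π i j * (lam1 + lam2 + ((i + j : ℤ) : ℝ) * mu) =
        lam1 * π (i - 1) j + lam2 * π i (j - 1) +
          ((i + 1 : ℤ) : ℝ) * mu * π (i + 1) j + ((j + 1 : ℤ) : ℝ) * mu * π i (j + 1)) :
    levelMass π m * (lam1 + lam2 + m * mu) =
      (lam1 + lam2) * levelMass π (m - 1) + (m + 1) * mu * levelMass π (m + 1) := by
  calc levelMass π m * (lam1 + lam2 + m * mu)
      = ∑ i ∈ Icc 0 m, (lam1 * π (i - 1) (m - i) + lam2 * π i (m - i - 1) +
          ((i + 1 : ℤ) : ℝ) * mu * π (i + 1) (m - i) +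
            ((m - i + 1 : ℤ) : ℝ) * mu * π i (m - i + 1)) := by
        rw [levelMass, sum_mul]
        refine sum_congr rfl fun i hi => ?_
        rw [mem_Icc] at hi
        simpa using hbal i (m - i) hi.1 (by omega) (by ring)
    _ = lam1 * ∑ i ∈ Icc 0 m, π (i - 1) (m - i) + lam2 * ∑ i ∈ Icc 0 m, π i (m - i - 1) +
          mu * (∑ i ∈ Icc 0 m, ((i + 1 : ℤ) : ℝ) * π (i + 1) (m - i) +
            ∑ i ∈ Icc 0 m, ((m - i + 1 : ℤ) : ℝ) * π i (m - i + 1)) := by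
        simp only [mul_sum, ← sum_add_distrib]
        exact sum_congr rfl fun i _ => by ring
    _ = (lam1 + lam2) * levelMass π (m - 1) + (m + 1) * mu * levelMass π (m + 1) := by
        rw [sum_Icc_sub_one_left hπ, sum_Icc_sub_one_right hπ, ← mul_levelMass_add_one hm]
        ring

end LevelMass

/-- For a birth–death chain on the levels `0, …, k` (birth rate `a`, death rate `m b` at level
`m`), global balance at the levels below `k` forces detailed balance across each cut. -/
lemma detailed_balance_of_global_balance {x : ℤ → ℝ} {a b : ℝ} {k : ℕ} (hx : x (-1) = 0)
    (hbal : ∀ m : ℕ, m < k → x m * (a + m * b) = a * x (m - 1) + (m + 1) * b * x (m + 1)) :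
    ∀ n : ℕ, n < k → a * x n = (n + 1) * b * x (n + 1) := by
  suffices h : ∀ n : ℕ, n ≤ k → a * x (n - 1) = n * b * x n by
    intro n hn
    simpa using h (n + 1) hn
  intro n
  induction n with
  | zero => simp [hx]
  | succ n ih =>
    intro hn
    have hbal_n := hbal n (by omega)
    push_cast
    simp only [add_sub_cancel_right]
    linear_combination hbal_n + ih (by omega)

lemma eq_pow_div_factorial_mul_of_succ_mul_eq {x : ℕ → ℝ} {a : ℝ} {k : ℕ}
    (h : ∀ n < k, (n + 1) * x (n + 1) = a * x n) : ∀ n ≤ k, x n = a ^ n / n ! * x 0 := by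
  intro n
  induction n with
  | zero => simp
  | succ n ih =>
    intro hn
    calc x (n + 1) = a * x n / (n + 1) := by
          rw [eq_div_iff (by positivity)]
          linear_combination h n hn
      _ = a ^ (n + 1) / (n + 1)! * x 0 := by
          rw [ih (by omega), pow_succ, Nat.factorial_succ, Nat.cast_mul, Nat.cast_succ]
          field_simp

lemma eq_div_sum_of_succ_mul_eq {x : ℕ → ℝ} {a : ℝ} {k : ℕ}
    (h : ∀ n < k, (n + 1) * x (n + 1) = a * x n) (hsum : ∑ n ∈ range (k + 1), x n = 1) :
    ∀ n ≤ k, x n = a ^ n / n ! / ∑ m ∈ range (k + 1), a ^ m / m ! := by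
  have hx := eq_pow_div_factorial_mul_of_succ_mul_eq h
  have hx0 : x 0 * ∑ m ∈ range (k + 1), a ^ m / m ! = 1 := by
    rw [← hsum, mul_sum]
    refine sum_congr rfl fun n hn => ?_
    rw [hx n (Nat.lt_succ_iff.mp (mem_range.mp hn)), mul_comm]
  intro n hn
  rw [hx n hn, div_eq_mul_inv _ (∑ m ∈ range (k + 1), _), ← eq_inv_of_mul_eq_one_left hx0]

theorem kserver_two_priority_aggregate_general (k : ℕ) (lam1 lam2 mu : ℝ)
    (hmu : 0 < mu)
    (π : ℤ → ℤ → ℝ)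
    (hzero : ∀ i j : ℤ, (i < 0 ∨ j < 0 ∨ (k : ℤ) < i + j) → π i j = 0)
    (hnc : ∀ i j : ℤ, 0 ≤ i → 0 ≤ j → i + j < (k : ℤ) →
      π i j * (lam1 + lam2 + ((i + j : ℤ) : ℝ) * mu) =
        lam1 * π (i - 1) j + lam2 * π i (j - 1) +
          ((i + 1 : ℤ) : ℝ) * mu * π (i + 1) j + ((j + 1 : ℤ) : ℝ) * mu * π i (j + 1))
    (hnorm : ∑ i ∈ Finset.range (k + 1), ∑ j ∈ Finset.range (k + 1 - i), π (i : ℤ) (j : ℤ) = 1) :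
    ∀ n ≤ k, ∑ i ∈ Finset.range (n + 1), π (i : ℤ) ((n : ℤ) - (i : ℤ)) =
      ((lam1 / mu + lam2 / mu) ^ n / (Nat.factorial n : ℝ)) /
        ∑ m ∈ Finset.range (k + 1), (lam1 / mu + lam2 / mu) ^ m / (Nat.factorial m : ℝ) := by
  have hπ : ∀ i j, i < 0 ∨ j < 0 → π i j = 0 := fun i j h => hzero i j (h.imp_right Or.inl)
  have hcut := detailed_balance_of_global_balance (k := k) (levelMass_neg_one (π := π))
    fun m hm => levelMass_balance hπ (Int.natCast_nonneg m) fun i j hi hj hij =>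
      hnc i j hi hj (by omega)
  have hrec : ∀ n < k, (n + 1) * levelMass π (n + 1 : ℕ) =
      (lam1 / mu + lam2 / mu) * levelMass π n := by
    intro n hn
    rw [← add_div, div_mul_eq_mul_div, eq_div_iff hmu.ne', hcut n hn]
    push_cast
    ring
  intro n hn
  rw [← levelMass_natCast]
  exact eq_div_sum_of_succ_mul_eq (x := fun n : ℕ => levelMass π n) hrec
    ((sum_range_levelMass k).trans hnorm) n hn

theorem kserver_two_priority_aggregate (k : ℕ) (hk : 1 ≤ k) (lam1 lam2 mu : ℝ)
    (hlam1 : 0 < lam1) (hlam2 : 0 < lam2) (hmu : 0 < mu)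
    (π : ℤ → ℤ → ℝ)
    (hzero : ∀ i j : ℤ, (i < 0 ∨ j < 0 ∨ (k : ℤ) < i + j) → π i j = 0)
    (hnc : ∀ i j : ℤ, 0 ≤ i → 0 ≤ j → i + j < (k : ℤ) →
      π i j * (lam1 + lam2 + ((i + j : ℤ) : ℝ) * mu) =
        lam1 * π (i - 1) j + lam2 * π i (j - 1) +
          ((i + 1 : ℤ) : ℝ) * mu * π (i + 1) j + ((j + 1 : ℤ) : ℝ) * mu * π i (j + 1))
    (ht1 : ∀ i j : ℤ, 0 ≤ i → 0 ≤ j → i + j = (k : ℤ) → i < (k : ℤ) →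
      π i j * (lam1 + (k : ℝ) * mu) =
        lam1 * π (i - 1) j + lam2 * π i (j - 1) + lam2 * π (i - 1) (j + 1))
    (ht2 : (k : ℝ) * mu * π (k : ℤ) 0 = lam1 * π ((k : ℤ) - 1) 1 + lam1 * π ((k : ℤ) - 1) 0)
    (hnorm : ∑ i ∈ Finset.range (k + 1), ∑ j ∈ Finset.range (k + 1 - i), π (i : ℤ) (j : ℤ) = 1) :
    ∀ n ≤ k, ∑ i ∈ Finset.range (n + 1), π (i : ℤ) ((n : ℤ) - (i : ℤ)) =
      ((lam1 / mu + lam2 / mu) ^ n / (Nat.factorial n : ℝ)) /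
        ∑ m ∈ Finset.range (k + 1), (lam1 / mu + lam2 / mu) ^ m / (Nat.factorial m : ℝ) :=
  kserver_two_priority_aggregate_general k lam1 lam2 mu hmu π hzero hnc hnorm
end
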